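/- arXiv:2604.11375 — 2 statements merged into one kernel-verified Lean document; each statement's English description precedes it below -/
import Mathlib

section
/- Let E be a real Hilbert space, let L > 0, and let f : E → ℝ be differentiable with L-Lipschitz gradient and bounded below. Let (x_k) be the gradient descent sequence x_{k+1} = x_k − (1/L)·∇f(x_k) from any initial point x₀. Then the gradient norms vanish asymptotically: ‖∇f(x_k)‖ → 0 as k → ∞. -/
/-!
Integrating the Lipschitz bound on `∇f` along a segment gives the descent lemma
`f (x + v) ≤ f x + ⟪∇f x, v⟫ + L/2 ‖v‖²`. For the step `v = -(1/L) ∇f x` it says that every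
iteration lowers `f` by at least `‖∇f x‖² / (2L)`. The values `f (x k)` therefore decrease and,
being bounded below, converge, so their successive differences, and with them the squared
gradient norms, tend to `0`.
-/

open Filter Set RealInnerProductSpace

theorem le_add_deriv_add_of_deriv_sub_le {φ φ' : ℝ → ℝ} {C : ℝ}
    (hφ : ∀ t ∈ Icc (0 : ℝ) 1, HasDerivAt φ (φ' t) t)
    (hC : ∀ t ∈ Ioo (0 : ℝ) 1, φ' t - φ' 0 ≤ C * t) :
    φ 1 ≤ φ 0 + φ' 0 + C / 2 := by
  set ψ : ℝ → ℝ := fun t => φ t - (t * φ' 0 + C / 2 * t ^ 2)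
  have hψ : ∀ t ∈ Icc (0 : ℝ) 1, HasDerivAt ψ (φ' t - (φ' 0 + C * t)) t := fun t ht => by
    refine ((hφ t ht).sub (((hasDerivAt_id t).mul_const (φ' 0)).add
      ((hasDerivAt_pow 2 t).const_mul (C / 2)))).congr_deriv ?_
    norm_num; ring
  have hanti : AntitoneOn ψ (Icc 0 1) := by
    refine antitoneOn_of_hasDerivWithinAt_nonpos (f' := fun t => φ' t - (φ' 0 + C * t))
      (convex_Icc 0 1) (fun t ht => (hψ t ht).continuousAt.continuousWithinAt)
      (fun t ht => ?_) (fun t ht => ?_)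
    · exact (hψ t (interior_subset ht)).hasDerivWithinAt
    · rw [interior_Icc] at ht
      linarith [hC t ht]
  have := hanti (left_mem_Icc.2 zero_le_one) (right_mem_Icc.2 zero_le_one) zero_le_one
  simp only [ψ] at this
  linarith

section Smooth

variable {E : Type*} [NormedAddCommGroup E] [InnerProductSpace ℝ E] [CompleteSpace E]

theorem apply_add_le_of_gradient_lipschitz {L : ℝ} {f : E → ℝ} (hf : Differentiable ℝ f)
    (hlip : ∀ x y : E, ‖gradient f x - gradient f y‖ ≤ L * ‖x - y‖) (x v : E) :
    f (x + v) ≤ f x + ⟪gradient f x, v⟫ + L / 2 * ‖v‖ ^ 2 := by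
  have hline : ∀ t : ℝ, HasDerivAt (fun s : ℝ => x + s • v) v t := fun t => by
    simpa using ((hasDerivAt_id t).smul_const v).const_add x
  have hφ : ∀ t : ℝ, HasDerivAt (fun s : ℝ => f (x + s • v)) ⟪gradient f (x + t • v), v⟫ t :=
    fun t => by
      have := (hf _).hasGradientAt.hasFDerivAt.comp_hasDerivAt t (hline t)
      rwa [InnerProductSpace.toDual_apply_apply] at this
  have hC : ∀ t ∈ Ioo (0 : ℝ) 1,
      ⟪gradient f (x + t • v), v⟫ - ⟪gradient f (x + (0 : ℝ) • v), v⟫ ≤ L * ‖v‖ ^ 2 * t := by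
    intro t ht
    calc _ = ⟪gradient f (x + t • v) - gradient f x, v⟫ := by simp [inner_sub_left]
      _ ≤ ‖gradient f (x + t • v) - gradient f x‖ * ‖v‖ := real_inner_le_norm _ _
      _ ≤ L * (t * ‖v‖) * ‖v‖ := by
        gcongr
        simpa [norm_smul, abs_of_pos ht.1] using hlip (x + t • v) x
      _ = L * ‖v‖ ^ 2 * t := by ring
  have := le_add_deriv_add_of_deriv_sub_le (fun t _ => hφ t) hC
  simp only [zero_smul, add_zero, one_smul] at this
  linarith

theorem sq_norm_gradient_le_of_gradient_lipschitz {L : ℝ} (hL : 0 < L) {f : E → ℝ}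
    (hf : Differentiable ℝ f)
    (hlip : ∀ x y : E, ‖gradient f x - gradient f y‖ ≤ L * ‖x - y‖) (x : E) :
    ‖gradient f x‖ ^ 2 ≤ 2 * L * (f x - f (x - (1 / L) • gradient f x)) := by
  have h := apply_add_le_of_gradient_lipschitz hf hlip x (-((1 / L) • gradient f x))
  rw [← sub_eq_add_neg, inner_neg_right, real_inner_smul_right, real_inner_self_eq_norm_sq,
    norm_neg, norm_smul, Real.norm_of_nonneg (by positivity)] at h
  calc ‖gradient f x‖ ^ 2
      = 2 * L * (1 / L * ‖gradient f x‖ ^ 2 - L / 2 * (1 / L * ‖gradient f x‖) ^ 2) := by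
        field_simp; ring
    _ ≤ 2 * L * (f x - f (x - (1 / L) • gradient f x)) := by gcongr 2 * L * ?_; linarith

end Smooth

theorem tendsto_sub_succ_of_antitone_of_bddBelow {u : ℕ → ℝ} (hu : Antitone u)
    (hbdd : BddBelow (range u)) : Tendsto (fun k => u k - u (k + 1)) atTop (nhds 0) := by
  have hlim := tendsto_atTop_ciInf hu hbdd
  simpa using hlim.sub (hlim.comp (tendsto_add_atTop_nat 1))

/-- Gradient norms vanish asymptotically along gradient descent with step size
`1/L` on an `L`-smooth function that is bounded below. -/
theorem gradient_descent_grad_norm_tendsto_zero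
    {E : Type*} [NormedAddCommGroup E] [InnerProductSpace ℝ E] [CompleteSpace E]
    (L : ℝ) (hL : 0 < L) (f : E → ℝ) (hf : Differentiable ℝ f)
    (hlip : ∀ x y : E, ‖gradient f x - gradient f y‖ ≤ L * ‖x - y‖)
    (hbdd : ∃ m : ℝ, ∀ x : E, m ≤ f x)
    (x : ℕ → E) (hx : ∀ k : ℕ, x (k + 1) = x k - (1 / L) • gradient f (x k)) :
    Filter.Tendsto (fun k => ‖gradient f (x k)‖) Filter.atTop (nhds 0) := by
  obtain ⟨m, hm⟩ := hbdd
  have hdecrease : ∀ k, ‖gradient f (x k)‖ ^ 2 ≤ 2 * L * (f (x k) - f (x (k + 1))) := fun k => by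
    rw [hx k]; exact sq_norm_gradient_le_of_gradient_lipschitz hL hf hlip (x k)
  have hanti : Antitone (fun k => f (x k)) := antitone_nat_of_succ_le fun k => by
    nlinarith [hdecrease k, sq_nonneg ‖gradient f (x k)‖]
  have hgap := tendsto_sub_succ_of_antitone_of_bddBelow hanti ⟨m, by rintro _ ⟨k, rfl⟩; exact hm _⟩
  have hsq : Tendsto (fun k => ‖gradient f (x k)‖ ^ 2) atTop (nhds 0) :=
    squeeze_zero (fun k => sq_nonneg _) hdecrease (by simpa using hgap.const_mul (2 * L))
  simpa [Real.sqrt_sq (norm_nonneg _)] using hsq.sqrt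
end

section
/- (Unrolled second-derivative bound along the deterministic sampling trajectory.) Let E be a real Banach space, let T ∈ ℕ, and let F_1, …, F_T : E → E be twice continuously differentiable maps such that for each t there exist ρ_t ≥ 0 and κ_t ≥ 0 with ‖DF_t(x)‖ ≤ ρ_t and ‖D²F_t(x)‖ ≤ κ_t for all x ∈ E. Let G = F_1 ∘ F_2 ∘ ⋯ ∘ F_T (with F_T applied first). Then for every x ∈ E, the second Fréchet derivative of G satisfies ‖D²G(x)‖ ≤ Σ_{t=1}^{T} (∏_{m=1}^{t−1} ρ_m) · κ_t · (∏_{s=t+1}^{T} ρ_s)², where empty products equal 1. -/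
/-!
By the chain rule `D(g ∘ f) = (Dg ∘ f) · Df`; differentiating this product of operator-valued
maps (a bilinear expression) gives `‖D²(g ∘ f)‖ ≤ ‖D²g‖ ‖Df‖² + ‖Dg‖ ‖D²f‖`. Peeling off the
first-applied step `F (T + 1)` therefore bounds the curvature of the `T + 1` step trajectory by
`S_T ρ_{T+1}² + (ρ_1 ⋯ ρ_T) κ_{T+1}`, whose solution with `S_0 = 0` is the stated sum.
-/

/-- `ddimComp F T = F 1 ∘ F 2 ∘ ⋯ ∘ F T` (with `F T` applied first),
modeling `T` deterministic DDIM denoising steps from the initial latent state. -/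
def ddimComp {E : Type*} (F : ℕ → E → E) : ℕ → E → E
  | 0 => id
  | (n + 1) => fun x => ddimComp F n (F (n + 1) x)

open ContinuousLinearMap Finset

section Composition

variable {𝕜 E F G : Type*} [NontriviallyNormedField 𝕜]
  [NormedAddCommGroup E] [NormedSpace 𝕜 E] [NormedAddCommGroup F] [NormedSpace 𝕜 F]
  [NormedAddCommGroup G] [NormedSpace 𝕜 G]

theorem norm_iteratedFDeriv_two_eq_norm_fderiv_fderiv (f : E → F) (x : E) :
    ‖iteratedFDeriv 𝕜 2 f x‖ = ‖fderiv 𝕜 (fderiv 𝕜 f) x‖ := by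
  rw [← norm_iteratedFDeriv_fderiv, norm_iteratedFDeriv_one]

theorem norm_fderiv_comp_le {g : F → G} {f : E → F} {x : E}
    (hg : DifferentiableAt 𝕜 g (f x)) (hf : DifferentiableAt 𝕜 f x) :
    ‖fderiv 𝕜 (g ∘ f) x‖ ≤ ‖fderiv 𝕜 g (f x)‖ * ‖fderiv 𝕜 f x‖ := by
  rw [fderiv_comp x hg hf]
  exact opNorm_comp_le _ _

theorem norm_iteratedFDeriv_two_comp_le {g : F → G} {f : E → F}
    (hg : ContDiff 𝕜 2 g) (hf : ContDiff 𝕜 2 f) (x : E) :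
    ‖iteratedFDeriv 𝕜 2 (g ∘ f) x‖ ≤
      ‖iteratedFDeriv 𝕜 2 g (f x)‖ * ‖fderiv 𝕜 f x‖ ^ 2 +
        ‖fderiv 𝕜 g (f x)‖ * ‖iteratedFDeriv 𝕜 2 f x‖ := by
  have hg' : ContDiff 𝕜 1 (fderiv 𝕜 g) := hg.fderiv_right le_rfl
  have hf' : ContDiff 𝕜 1 (fderiv 𝕜 f) := hf.fderiv_right le_rfl
  have hfd : Differentiable 𝕜 f := hf.differentiable two_ne_zero
  have chain_rule : fderiv 𝕜 (g ∘ f) = fun y => compL 𝕜 E F G (fderiv 𝕜 g (f y)) (fderiv 𝕜 f y) :=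
    funext fun y => fderiv_comp y (hg.differentiable two_ne_zero (f y)) (hfd y)
  have h2g : ‖fderiv 𝕜 (fderiv 𝕜 g ∘ f) x‖ ≤ ‖iteratedFDeriv 𝕜 2 g (f x)‖ * ‖fderiv 𝕜 f x‖ := by
    rw [norm_iteratedFDeriv_two_eq_norm_fderiv_fderiv]
    exact norm_fderiv_comp_le (hg'.differentiable one_ne_zero _) (hfd x)
  calc ‖iteratedFDeriv 𝕜 2 (g ∘ f) x‖
      = ‖iteratedFDeriv 𝕜 1 (fun y => compL 𝕜 E F G (fderiv 𝕜 g (f y)) (fderiv 𝕜 f y)) x‖ := by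
        rw [← chain_rule, norm_iteratedFDeriv_fderiv]
    _ ≤ ∑ i ∈ range 2, (Nat.choose 1 i : ℝ) * ‖iteratedFDeriv 𝕜 i (fderiv 𝕜 g ∘ f) x‖ *
          ‖iteratedFDeriv 𝕜 (1 - i) (fderiv 𝕜 f) x‖ :=
        (compL 𝕜 E F G).norm_iteratedFDeriv_le_of_bilinear_of_le_one
          (hg'.comp (hf.of_le one_le_two)) hf' x le_rfl (norm_compL_le 𝕜 E F G)
    _ = ‖fderiv 𝕜 g (f x)‖ * ‖iteratedFDeriv 𝕜 2 f x‖ +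
          ‖fderiv 𝕜 (fderiv 𝕜 g ∘ f) x‖ * ‖fderiv 𝕜 f x‖ := by
        simp [sum_range_succ, norm_iteratedFDeriv_fderiv]
    _ ≤ _ := by
        rw [add_comm, sq, ← mul_assoc]
        gcongr

end Composition

section CurvatureBound

variable {R : Type*} [CommSemiring R] (ρ κ : ℕ → R)

def curvatureBound (T : ℕ) : R :=
  ∑ t ∈ Icc 1 T, (∏ m ∈ Icc 1 (t - 1), ρ m) * κ t * (∏ s ∈ Icc (t + 1) T, ρ s) ^ 2

theorem curvatureBound_zero : curvatureBound ρ κ 0 = 0 := by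
  simp [curvatureBound]

theorem curvatureBound_succ (T : ℕ) :
    curvatureBound ρ κ (T + 1) =
      curvatureBound ρ κ T * ρ (T + 1) ^ 2 + (∏ m ∈ Icc 1 T, ρ m) * κ (T + 1) := by
  rw [curvatureBound, sum_Icc_succ_top (by omega), curvatureBound, sum_mul]
  congr 1
  · refine sum_congr rfl fun t ht => ?_
    rw [prod_Icc_succ_top (by grind)]
    ring
  · simp

end CurvatureBound

theorem ddimComp_succ {E : Type*} (F : ℕ → E → E) (T : ℕ) :
    ddimComp F (T + 1) = ddimComp F T ∘ F (T + 1) :=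
  rfl

theorem ddimComp_induction {E : Type*} {F : ℕ → E → E} (P : (E → E) → Prop) (hid : P id)
    (hcomp : ∀ g f, P g → P f → P (g ∘ f)) {T : ℕ} (hF : ∀ t, 1 ≤ t → t ≤ T → P (F t)) :
    P (ddimComp F T) := by
  induction T with
  | zero => exact hid
  | succ T ih =>
    exact hcomp _ _ (ih fun t h1 h2 => hF t h1 (by omega)) (hF (T + 1) (by omega) le_rfl)

section Trajectory

variable {𝕜 E : Type*} [NontriviallyNormedField 𝕜] [NormedAddCommGroup E] [NormedSpace 𝕜 E]
  {F : ℕ → E → E}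

theorem norm_fderiv_ddimComp_le {ρ : ℕ → ℝ} {T : ℕ}
    (hF : ∀ t, 1 ≤ t → t ≤ T → Differentiable 𝕜 (F t))
    (hJ : ∀ t, 1 ≤ t → t ≤ T → ∀ x, ‖fderiv 𝕜 (F t) x‖ ≤ ρ t) (x : E) :
    ‖fderiv 𝕜 (ddimComp F T) x‖ ≤ ∏ t ∈ Icc 1 T, ρ t := by
  induction T generalizing x with
  | zero => simpa [ddimComp] using norm_id_le
  | succ T ih =>
    have ihJ := ih (fun t h1 h2 => hF t h1 (by omega)) (fun t h1 h2 => hJ t h1 (by omega))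
    have hG : Differentiable 𝕜 (ddimComp F T) :=
      ddimComp_induction _ differentiable_id (fun _ _ => Differentiable.comp)
        fun t h1 h2 => hF t h1 (by omega)
    rw [ddimComp_succ, prod_Icc_succ_top (by omega)]
    calc _ ≤ ‖fderiv 𝕜 (ddimComp F T) (F (T + 1) x)‖ * ‖fderiv 𝕜 (F (T + 1)) x‖ :=
          norm_fderiv_comp_le (hG _) (hF (T + 1) (by omega) le_rfl x)
      _ ≤ _ := mul_le_mul (ihJ _) (hJ (T + 1) (by omega) le_rfl x) (norm_nonneg _)
          ((norm_nonneg _).trans (ihJ x))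

theorem norm_iteratedFDeriv_two_ddimComp_le {ρ κ : ℕ → ℝ} {T : ℕ}
    (hC2 : ∀ t, 1 ≤ t → t ≤ T → ContDiff 𝕜 2 (F t))
    (hJ : ∀ t, 1 ≤ t → t ≤ T → ∀ x, ‖fderiv 𝕜 (F t) x‖ ≤ ρ t)
    (hH : ∀ t, 1 ≤ t → t ≤ T → ∀ x, ‖iteratedFDeriv 𝕜 2 (F t) x‖ ≤ κ t) (x : E) :
    ‖iteratedFDeriv 𝕜 2 (ddimComp F T) x‖ ≤ curvatureBound ρ κ T := by
  induction T generalizing x with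
  | zero =>
    have hid : fderiv 𝕜 (id : E → E) = fun _ => ContinuousLinearMap.id 𝕜 E :=
      funext fun _ => fderiv_id
    simp [ddimComp, curvatureBound_zero, norm_iteratedFDeriv_two_eq_norm_fderiv_fderiv, hid]
  | succ T ih =>
    have ihH := ih (fun t h1 h2 => hC2 t h1 (by omega)) (fun t h1 h2 => hJ t h1 (by omega))
      (fun t h1 h2 => hH t h1 (by omega))
    have hG : ContDiff 𝕜 2 (ddimComp F T) :=
      ddimComp_induction _ contDiff_id (fun _ _ => ContDiff.comp)
        fun t h1 h2 => hC2 t h1 (by omega)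
    have hGJ := norm_fderiv_ddimComp_le (T := T)
      (fun t h1 h2 => (hC2 t h1 (by omega)).differentiable two_ne_zero)
      (fun t h1 h2 => hJ t h1 (by omega))
    rw [ddimComp_succ, curvatureBound_succ]
    refine (norm_iteratedFDeriv_two_comp_le hG (hC2 (T + 1) (by omega) le_rfl) x).trans ?_
    gcongr
    · exact (norm_nonneg _).trans (ihH x)
    · exact ihH _
    · exact hJ (T + 1) (by omega) le_rfl x
    · exact (norm_nonneg _).trans (hGJ x)
    · exact hGJ _
    · exact hH (T + 1) (by omega) le_rfl x

end Trajectory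

theorem ddim_trajectory_second_derivative_bound_general
    {E : Type*} [NormedAddCommGroup E] [NormedSpace ℝ E]
    (T : ℕ) (F : ℕ → E → E) (ρ κ : ℕ → ℝ)
    (hC2 : ∀ t : ℕ, 1 ≤ t → t ≤ T → ContDiff ℝ 2 (F t))
    (hJ : ∀ t : ℕ, 1 ≤ t → t ≤ T → ∀ x : E, ‖fderiv ℝ (F t) x‖ ≤ ρ t)
    (hH : ∀ t : ℕ, 1 ≤ t → t ≤ T → ∀ x : E, ‖iteratedFDeriv ℝ 2 (F t) x‖ ≤ κ t) :
    ∀ x : E,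
      ‖iteratedFDeriv ℝ 2 (ddimComp F T) x‖ ≤
        ∑ t ∈ Finset.Icc 1 T,
          (∏ m ∈ Finset.Icc 1 (t - 1), ρ m) * κ t *
            (∏ s ∈ Finset.Icc (t + 1) T, ρ s) ^ 2 :=
  norm_iteratedFDeriv_two_ddimComp_le hC2 hJ hH

/-- Unrolled second-derivative bound along the deterministic sampling
trajectory: if each `C²` step `F t` (for `1 ≤ t ≤ T`) satisfies
`‖DF t (x)‖ ≤ ρ t` and `‖D²F t (x)‖ ≤ κ t`, then the composition
`G = F 1 ∘ ⋯ ∘ F T` satisfies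
`‖D²G(x)‖ ≤ ∑_{t=1}^T (∏_{m=1}^{t-1} ρ m) · κ t · (∏_{s=t+1}^T ρ s)²`. -/
theorem ddim_trajectory_second_derivative_bound
    {E : Type*} [NormedAddCommGroup E] [NormedSpace ℝ E] [CompleteSpace E]
    (T : ℕ) (F : ℕ → E → E) (ρ κ : ℕ → ℝ)
    (hρ : ∀ t : ℕ, 1 ≤ t → t ≤ T → 0 ≤ ρ t)
    (hκ : ∀ t : ℕ, 1 ≤ t → t ≤ T → 0 ≤ κ t)
    (hC2 : ∀ t : ℕ, 1 ≤ t → t ≤ T → ContDiff ℝ 2 (F t))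
    (hJ : ∀ t : ℕ, 1 ≤ t → t ≤ T → ∀ x : E, ‖fderiv ℝ (F t) x‖ ≤ ρ t)
    (hH : ∀ t : ℕ, 1 ≤ t → t ≤ T → ∀ x : E, ‖iteratedFDeriv ℝ 2 (F t) x‖ ≤ κ t) :
    ∀ x : E,
      ‖iteratedFDeriv ℝ 2 (ddimComp F T) x‖ ≤
        ∑ t ∈ Finset.Icc 1 T,
          (∏ m ∈ Finset.Icc 1 (t - 1), ρ m) * κ t *
            (∏ s ∈ Finset.Icc (t + 1) T, ρ s) ^ 2 :=
  ddim_trajectory_second_derivative_bound_general T F ρ κ hC2 hJ hH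
end
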